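/- Define Φ(e,p) = e^{(τ-p)A(0)} e^{pA(e)} where A(e) = [[-β, k(1-e)T₀],[Nβ, -γ]] with positive parameters and τ > 0 fixed. Then for 0 ≤ e < e' ≤ 1 and p ∈ (0,τ], the spectral radius satisfies ρ(Φ(e',p)) < ρ(Φ(e,p)). -/

import Mathlib

open Matrix

/-- The matrix exponential over the reals. -/
noncomputable def mexp {n : ℕ} (A : Matrix (Fin n) (Fin n) ℝ) : Matrix (Fin n) (Fin n) ℝ :=
  NormedSpace.exp A

/-- Spectral radius of a real matrix: largest modulus of its (complex) eigenvalues. -/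
noncomputable def specRad {n : ℕ} (A : Matrix (Fin n) (Fin n) ℝ) : ENNReal :=
  spectralRadius ℂ (A.map (Complex.ofReal))

/-- The matrix `A(e)` of the within-host HIV model with RT-inhibitor efficiency `e`. -/
noncomputable def Amat (β γ k T₀ N : ℝ) (e : ℝ) : Matrix (Fin 2) (Fin 2) ℝ :=
  !![-β, k * (1 - e) * T₀; N * β, -γ]

/-- The monodromy matrix `Φ(e,p)` for bang-bang periodic treatment. -/
noncomputable def Phi (β γ k T₀ N τ : ℝ) (e p : ℝ) : Matrix (Fin 2) (Fin 2) ℝ :=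
  mexp ((τ - p) • Amat β γ k T₀ N 0) * mexp (p • Amat β γ k T₀ N e)

/-!
Both factors of `Φ(e,p)` are, up to the scalar `exp (-(β + γ) t)`, exponentials of entrywise
nonnegative matrices, and the exponential series shows that `exp` is monotone on such matrices.
Raising `e` lowers the `(0,1)` entry of `A(e)`, hence strictly lowers the `(1,1)` entry of
`exp (p A(e))` (through its quadratic term) and so the trace of `Φ(e,p)`, while
`det Φ(e,p) = exp (-(β + γ) τ)` does not depend on `e` because `det ∘ exp = exp ∘ tr`. For a `2 × 2`
matrix with real eigenvalues the spectral radius is `(|tr| + √(tr² - 4 det)) / 2`, which increases with `|tr|`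
when `det` is fixed.
-/

open NormedSpace

namespace Matrix

section Nonneg

variable {m : Type*} [Fintype m]

theorem mul_apply_nonneg {A B : Matrix m m ℝ} (hA : ∀ i j, 0 ≤ A i j) (hB : ∀ i j, 0 ≤ B i j)
    (i j : m) : 0 ≤ (A * B) i j :=
  Finset.sum_nonneg fun k _ => mul_nonneg (hA i k) (hB k j)

theorem trace_mul_lt_trace_mul {A B C : Matrix m m ℝ} (hA : ∀ i j, 0 ≤ A i j)
    (hBC : ∀ i j, B i j ≤ C i j) {i : m} (hAi : 0 < A i i) (hi : B i i < C i i) :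
    trace (A * B) < trace (A * C) := by
  have hle (k j : m) : A k j * B j k ≤ A k j * C j k :=
    mul_le_mul_of_nonneg_left (hBC j k) (hA k j)
  exact Finset.sum_lt_sum (fun k _ => Finset.sum_le_sum fun j _ => hle k j)
    ⟨i, Finset.mem_univ _, Finset.sum_lt_sum (fun j _ => hle i j)
      ⟨i, Finset.mem_univ _, mul_lt_mul_of_pos_left hi hAi⟩⟩

variable [DecidableEq m]

theorem pow_apply_le_pow_apply {X Y : Matrix m m ℝ} (hX : ∀ i j, 0 ≤ X i j)
    (hXY : ∀ i j, X i j ≤ Y i j) (n : ℕ) (i j : m) : (X ^ n) i j ≤ (Y ^ n) i j := by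
  induction n generalizing i j with
  | zero => exact le_rfl
  | succ n ih =>
    rw [pow_succ, pow_succ, mul_apply, mul_apply]
    exact Finset.sum_le_sum fun k _ =>
      mul_le_mul (ih i k) (hXY k j) (hX k j) ((pow_apply_nonneg hX n i k).trans (ih i k))

theorem hasSum_exp_apply (X : Matrix m m ℝ) (i j : m) :
    HasSum (fun n => (n.factorial⁻¹ : ℝ) * (X ^ n) i j) (exp X i j) := by
  have h := open scoped Norms.Operator in exp_series_hasSum_exp' (𝕂 := ℝ) X
  exact Pi.hasSum.mp (Pi.hasSum.mp h i) j

theorem exp_apply_nonneg {X : Matrix m m ℝ} (hX : ∀ i j, 0 ≤ X i j) (i j : m) :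
    0 ≤ exp X i j :=
  (hasSum_exp_apply X i j).nonneg fun n => by have := pow_apply_nonneg hX n i j; positivity

theorem one_le_exp_apply_self {X : Matrix m m ℝ} (hX : ∀ i j, 0 ≤ X i j) (i : m) :
    1 ≤ exp X i i := by
  simpa using le_hasSum (hasSum_exp_apply X i i) 0 fun n _ => by
    have := pow_apply_nonneg hX n i i; positivity

theorem exp_apply_le_exp_apply {X Y : Matrix m m ℝ} (hX : ∀ i j, 0 ≤ X i j)
    (hXY : ∀ i j, X i j ≤ Y i j) (i j : m) : exp X i j ≤ exp Y i j :=
  hasSum_le (fun n => by gcongr; exact pow_apply_le_pow_apply hX hXY n i j)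
    (hasSum_exp_apply X i j) (hasSum_exp_apply Y i j)

theorem exp_apply_lt_exp_apply {X Y : Matrix m m ℝ} (hX : ∀ i j, 0 ≤ X i j)
    (hXY : ∀ i j, X i j ≤ Y i j) {i j : m} {n : ℕ} (hn : (X ^ n) i j < (Y ^ n) i j) :
    exp X i j < exp Y i j :=
  hasSum_lt (fun n => by gcongr; exact pow_apply_le_pow_apply hX hXY n i j)
    (by gcongr) (hasSum_exp_apply X i j) (hasSum_exp_apply Y i j)

theorem exp_sub_smul_one (X : Matrix m m ℝ) (c : ℝ) :
    exp (X - c • 1) = Real.exp (-c) • exp X := by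
  have hexp : (exp fun _ : m => -c) = fun _ => Real.exp (-c) := by
    ext; rw [Pi.coe_exp, Real.exp_eq_exp_ℝ]
  rw [sub_eq_add_neg, ← neg_smul, exp_add_of_commute _ _ ((Commute.one_right X).smul_right _),
    smul_one_eq_diagonal, exp_diagonal, hexp, ← smul_one_eq_diagonal, mul_smul_comm, mul_one]

end Nonneg

section FinTwo

variable {R : Type*} [CommRing R]

theorem adjugate_fin_two_eq_mul_transpose_mul_inv (A : Matrix (Fin 2) (Fin 2) R) :
    adjugate A = !![0, 1; -1, 0] * Aᵀ * (!![0, 1; -1, 0] : Matrix (Fin 2) (Fin 2) R)⁻¹ := by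
  have hinv : (!![0, 1; -1, 0] : Matrix (Fin 2) (Fin 2) R)⁻¹ = !![0, -1; 1, 0] :=
    inv_eq_right_inv (by simp [one_fin_two])
  rw [hinv, adjugate_fin_two]
  ext i j
  fin_cases i <;> fin_cases j <;> simp [mul_apply, vecMul, dotProduct, Fin.sum_univ_two]

theorem adjugate_fin_two_eq_trace_smul_sub (A : Matrix (Fin 2) (Fin 2) R) :
    adjugate A = trace A • 1 - A := by
  rw [adjugate_fin_two, trace_fin_two]
  ext i j
  fin_cases i <;> fin_cases j <;> simp

end FinTwo

section FinTwoExp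

variable {𝔸 : Type*} [NormedCommRing 𝔸] [NormedAlgebra ℚ 𝔸] [CompleteSpace 𝔸]

theorem exp_adjugate_fin_two (A : Matrix (Fin 2) (Fin 2) 𝔸) :
    exp (adjugate A) = adjugate (exp A) := by
  have hJ : IsUnit (!![0, 1; -1, 0] : Matrix (Fin 2) (Fin 2) 𝔸) := by
    simp [isUnit_iff_isUnit_det, det_fin_two_of]
  rw [adjugate_fin_two_eq_mul_transpose_mul_inv, adjugate_fin_two_eq_mul_transpose_mul_inv,
    exp_conj _ _ hJ, exp_transpose]

/-- `det (exp A) • 1 = exp A * adj (exp A) = exp A * exp (adj A) = exp (A + adj A)`, and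
`A + adj A = tr A • 1` for `2 × 2` matrices. -/
theorem det_exp_fin_two (A : Matrix (Fin 2) (Fin 2) 𝔸) : det (exp A) = exp (trace A) := by
  have h := mul_adjugate (exp A)
  have hcomm : Commute A (adjugate A) := (mul_adjugate A).trans (adjugate_mul A).symm
  rw [← exp_adjugate_fin_two, ← exp_add_of_commute _ _ hcomm, adjugate_fin_two_eq_trace_smul_sub,
    add_sub_cancel, smul_one_eq_diagonal, exp_diagonal] at h
  simpa using (congrFun (congrFun h 0) 0).symm

end FinTwoExp

theorem discr_fin_two_nonneg {X : Matrix (Fin 2) (Fin 2) ℝ} (hX : ∀ i j, 0 ≤ X i j) :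
    0 ≤ X.discr := by
  rw [discr_fin_two, trace_fin_two, det_fin_two]
  nlinarith [sq_nonneg (X 0 0 - X 1 1), mul_nonneg (hX 0 1) (hX 1 0)]

theorem spectrum_map_ofReal_fin_two {X : Matrix (Fin 2) (Fin 2) ℝ} (hX : 0 ≤ X.discr) :
    spectrum ℂ (X.map Complex.ofReal) =
      {(((X.trace + √X.discr) / 2 : ℝ) : ℂ), (((X.trace - √X.discr) / 2 : ℝ) : ℂ)} := by
  refine Set.ext fun z => ?_
  have hs : discrim (1 : ℂ) (-X.trace) X.det = (√X.discr : ℂ) * (√X.discr : ℂ) := by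
    rw [← Complex.ofReal_mul, Real.mul_self_sqrt hX, discr_fin_two, discrim]
    push_cast; ring
  have ht : (X.map Complex.ofReal).trace = X.trace := by simp [trace_fin_two]
  have hd : (X.map Complex.ofReal).det = X.det := by simp [det_fin_two]
  rw [mem_spectrum_iff_isRoot_charpoly, charpoly_fin_two, Polynomial.IsRoot.def]
  simp only [Polynomial.eval_add, Polynomial.eval_sub, Polynomial.eval_pow, Polynomial.eval_mul,
    Polynomial.eval_X, Polynomial.eval_C, ht, hd, Set.mem_insert_iff, Set.mem_singleton_iff]
  convert quadratic_eq_zero_iff one_ne_zero hs z using 3 <;> push_cast <;> ring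

end Matrix

theorem specRad_fin_two {X : Matrix (Fin 2) (Fin 2) ℝ} (hX : 0 ≤ X.discr) :
    specRad X = ENNReal.ofReal ((|X.trace| + √X.discr) / 2) := by
  have hmax : max |(X.trace + √X.discr) / 2| |(X.trace - √X.discr) / 2|
      = (|X.trace| + √X.discr) / 2 := by
    have := Real.sqrt_nonneg X.discr
    rcases le_total 0 X.trace with h | h
    · rw [abs_of_nonneg h, abs_of_nonneg (by positivity : 0 ≤ (X.trace + √X.discr) / 2),
        max_eq_left (abs_le.2 ⟨by linarith, by linarith⟩)]
    · rw [abs_of_nonpos h, abs_of_nonpos (by linarith : (X.trace - √X.discr) / 2 ≤ 0),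
        max_eq_right (abs_le.2 ⟨by linarith, by linarith⟩)]
      ring
  simp only [specRad, spectralRadius, spectrum_map_ofReal_fin_two hX, iSup_insert,
    iSup_singleton, Complex.nnnorm_real]
  rw [← hmax, ENNReal.ofReal_max, ← enorm_eq_nnnorm, ← enorm_eq_nnnorm, Real.enorm_eq_ofReal_abs,
    Real.enorm_eq_ofReal_abs]

theorem specRad_lt_specRad_of_det_eq {X Y : Matrix (Fin 2) (Fin 2) ℝ} (hX : 0 ≤ X.discr)
    (hdet : X.det = Y.det) (htr : |X.trace| < |Y.trace|) : specRad X < specRad Y := by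
  have hdiscr : X.discr < Y.discr := by
    rw [discr_fin_two, discr_fin_two, hdet]
    linarith [sq_lt_sq.2 htr]
  have hYtr : 0 < |Y.trace| := (abs_nonneg _).trans_lt htr
  rw [specRad_fin_two hX, specRad_fin_two (hX.trans hdiscr.le)]
  have hpos : 0 < (|Y.trace| + √Y.discr) / 2 := by linarith [Real.sqrt_nonneg Y.discr]
  exact (ENNReal.ofReal_lt_ofReal_iff hpos).2 (by linarith [Real.sqrt_le_sqrt hdiscr.le])

section Model

noncomputable def shiftedAmat (β γ k T₀ N e : ℝ) : Matrix (Fin 2) (Fin 2) ℝ :=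
  !![γ, k * (1 - e) * T₀; N * β, β]

variable {β γ k T₀ N : ℝ}

theorem Amat_eq_shiftedAmat_sub (e : ℝ) :
    Amat β γ k T₀ N e = shiftedAmat β γ k T₀ N e - (β + γ) • 1 := by
  ext i j
  fin_cases i <;> fin_cases j <;> simp [Amat, shiftedAmat]

theorem mexp_smul_Amat (e s : ℝ) :
    mexp (s • Amat β γ k T₀ N e) =
      Real.exp (-(s * (β + γ))) • exp (s • shiftedAmat β γ k T₀ N e) := by
  rw [mexp, Amat_eq_shiftedAmat_sub, smul_sub, smul_smul, exp_sub_smul_one]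

theorem Phi_eq_smul (τ e p : ℝ) :
    Phi β γ k T₀ N τ e p = Real.exp (-(τ * (β + γ))) •
      (exp ((τ - p) • shiftedAmat β γ k T₀ N 0) * exp (p • shiftedAmat β γ k T₀ N e)) := by
  rw [Phi, mexp_smul_Amat, mexp_smul_Amat, smul_mul_smul, ← Real.exp_add]
  congr 2
  ring

theorem det_mexp_smul_Amat (e s : ℝ) :
    det (mexp (s • Amat β γ k T₀ N e)) = Real.exp (-(s * (β + γ))) := by
  rw [mexp, det_exp_fin_two, ← Real.exp_eq_exp_ℝ, trace_smul, Amat, trace_fin_two_of, smul_eq_mul]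
  congr 1
  ring

theorem det_Phi (τ e p : ℝ) :
    det (Phi β γ k T₀ N τ e p) = Real.exp (-(τ * (β + γ))) := by
  rw [Phi, det_mul, det_mexp_smul_Amat, det_mexp_smul_Amat, ← Real.exp_add]
  congr 1
  ring

theorem shiftedAmat_nonneg (hβ : 0 ≤ β) (hγ : 0 ≤ γ) (hk : 0 ≤ k) (hT₀ : 0 ≤ T₀) (hN : 0 ≤ N)
    {e : ℝ} (he : e ≤ 1) {s : ℝ} (hs : 0 ≤ s) (i j : Fin 2) :
    0 ≤ (s • shiftedAmat β γ k T₀ N e) i j := by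
  have : 0 ≤ 1 - e := sub_nonneg.2 he
  fin_cases i <;> fin_cases j <;> simp [shiftedAmat] <;> positivity

theorem shiftedAmat_anti (hk : 0 ≤ k) (hT₀ : 0 ≤ T₀) {e e' : ℝ} (he : e ≤ e') {s : ℝ}
    (hs : 0 ≤ s) (i j : Fin 2) :
    (s • shiftedAmat β γ k T₀ N e') i j ≤ (s • shiftedAmat β γ k T₀ N e) i j := by
  fin_cases i <;> fin_cases j <;> simp [shiftedAmat]
  gcongr

theorem sq_shiftedAmat_one_one_lt (hβ : 0 < β) (hk : 0 < k) (hT₀ : 0 < T₀) (hN : 0 < N)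
    {e e' : ℝ} (he : e < e') {s : ℝ} (hs : 0 < s) :
    ((s • shiftedAmat β γ k T₀ N e') ^ 2) 1 1 < ((s • shiftedAmat β γ k T₀ N e) ^ 2) 1 1 := by
  simp only [shiftedAmat, smul_of, smul_cons, smul_eq_mul, smul_empty, sq, mul_apply, of_apply,
    cons_val', cons_val_fin_one, cons_val_one, Fin.sum_univ_two, cons_val_zero,
    add_lt_add_iff_right]
  gcongr

theorem Phi_nonneg (hβ : 0 ≤ β) (hγ : 0 ≤ γ) (hk : 0 ≤ k) (hT₀ : 0 ≤ T₀) (hN : 0 ≤ N)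
    {τ e p : ℝ} (he : e ≤ 1) (hp : 0 ≤ p) (hpτ : p ≤ τ) (i j : Fin 2) :
    0 ≤ Phi β γ k T₀ N τ e p i j := by
  rw [Phi_eq_smul, Matrix.smul_apply, smul_eq_mul]
  exact mul_nonneg (Real.exp_pos _).le <| mul_apply_nonneg
    (exp_apply_nonneg (shiftedAmat_nonneg hβ hγ hk hT₀ hN zero_le_one (sub_nonneg.2 hpτ)))
    (exp_apply_nonneg (shiftedAmat_nonneg hβ hγ hk hT₀ hN he hp)) i j

theorem trace_Phi_lt_trace_Phi (hβ : 0 < β) (hγ : 0 ≤ γ) (hk : 0 < k) (hT₀ : 0 < T₀)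
    (hN : 0 < N) {τ e e' p : ℝ} (he : e < e') (he' : e' ≤ 1) (hp : 0 < p) (hpτ : p ≤ τ) :
    trace (Phi β γ k T₀ N τ e' p) < trace (Phi β γ k T₀ N τ e p) := by
  have hK0 := shiftedAmat_nonneg hβ.le hγ hk.le hT₀.le hN.le zero_le_one (sub_nonneg.2 hpτ)
  have hK' := shiftedAmat_nonneg hβ.le hγ hk.le hT₀.le hN.le he' hp.le
  have hK'K := shiftedAmat_anti (β := β) (γ := γ) (N := N) hk.le hT₀.le he.le hp.le
  rw [Phi_eq_smul, Phi_eq_smul, trace_smul, trace_smul, smul_eq_mul, smul_eq_mul]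
  refine mul_lt_mul_of_pos_left (trace_mul_lt_trace_mul (i := 1) (exp_apply_nonneg hK0)
    (exp_apply_le_exp_apply hK' hK'K) (one_pos.trans_le (one_le_exp_apply_self hK0 1))
    (exp_apply_lt_exp_apply hK' hK'K (sq_shiftedAmat_one_one_lt hβ hk hT₀ hN he hp)))
    (Real.exp_pos _)

end Model

theorem specRad_Phi_anti_in_e_general (β γ k T₀ N τ : ℝ) (hβ : 0 < β) (hγ : 0 < γ) (hk : 0 < k)
    (hT₀ : 0 < T₀) (hN : 0 < N)
    (e e' p : ℝ) (hee' : e < e') (he'1 : e' ≤ 1) (hp0 : 0 < p) (hpτ : p ≤ τ) :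
    specRad (Phi β γ k T₀ N τ e' p) < specRad (Phi β γ k T₀ N τ e p) := by
  have hΦ' := Phi_nonneg hβ.le hγ.le hk.le hT₀.le hN.le he'1 hp0.le hpτ
  have htr := trace_Phi_lt_trace_Phi hβ hγ.le hk hT₀ hN hee' he'1 hp0 hpτ
  have htr' : 0 ≤ trace (Phi β γ k T₀ N τ e' p) := Finset.sum_nonneg fun i _ => hΦ' i i
  refine specRad_lt_specRad_of_det_eq (discr_fin_two_nonneg hΦ') (by rw [det_Phi, det_Phi]) ?_
  rwa [abs_of_nonneg htr', abs_of_nonneg (htr'.trans htr.le)]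

/-- Monotonicity of the spectral radius of `Φ(e,p)` in the efficiency `e`. -/
theorem specRad_Phi_anti_in_e (β γ k T₀ N τ : ℝ) (hβ : 0 < β) (hγ : 0 < γ) (hk : 0 < k)
    (hT₀ : 0 < T₀) (hN : 0 < N) (hτ : 0 < τ)
    (e e' p : ℝ) (he0 : 0 ≤ e) (hee' : e < e') (he'1 : e' ≤ 1) (hp0 : 0 < p) (hpτ : p ≤ τ) :
    specRad (Phi β γ k T₀ N τ e' p) < specRad (Phi β γ k T₀ N τ e p) :=
  specRad_Phi_anti_in_e_general β γ k T₀ N τ hβ hγ hk hT₀ hN e e' p hee' he'1 hp0 hpτ
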